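/- (Existence of a dominating Pareto point, used in the proof of Lemma 2.) Let n : ℕ and let S ⊆ ℝⁿ be a closed set contained in the nonnegative orthant {x : ℝⁿ | 0 ≤ x}. Then for every x ∈ S there exists p ∈ S with p ≤ x such that p is Pareto-minimal in S. -/

import Mathlib

/-- The Pareto frontier of a set `S` in `Fin n → ℝ` (componentwise order):
the set of Pareto-minimal points, i.e. points of `S` not strictly dominated by
any other point of `S`. -/
def paretoFrontier {n : ℕ} (S : Set (Fin n → ℝ)) : Set (Fin n → ℝ) :=
  {p | p ∈ S ∧ ¬ ∃ q ∈ S, q ≤ p ∧ q ≠ p}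

/-! The box `S ∩ [0, x]` is compact, so the coordinate sum, which is continuous and strictly
monotone for the componentwise order, attains its minimum on it. A minimiser is minimal in the
box, and every point of `S` below it lies in the box, so it is minimal in all of `S`. -/

open Set

theorem mem_paretoFrontier_iff {n : ℕ} {S : Set (Fin n → ℝ)} {p : Fin n → ℝ} :
    p ∈ paretoFrontier S ↔ Minimal (· ∈ S) p := by
  simp only [paretoFrontier, minimal_mem_iff, mem_ofPred_eq, not_exists, not_and, not_not]
  exact and_congr_right fun _ ↦ forall₂_congr fun _ _ ↦ imp_congr_right fun _ ↦ eq_comm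

theorem IsCompact.exists_minimal_of_strictMonoOn {α β : Type*} [TopologicalSpace α] [Preorder α]
    [TopologicalSpace β] [LinearOrder β] [ClosedIicTopology β] {K : Set α} {f : α → β}
    (hK : IsCompact K) (hne : K.Nonempty) (hf : StrictMonoOn f K) (hcont : ContinuousOn f K) :
    ∃ p, Minimal (· ∈ K) p := by
  obtain ⟨p, hpK, hmin⟩ := hK.exists_isMinOn hne hcont
  exact ⟨p, MinimalFor.minimal_of_strictMonoOn hf ⟨hpK, fun q hqK _ ↦ hmin hqK⟩⟩

theorem Minimal.of_mem_inter_Iic {α : Type*} [Preorder α] {s : Set α} {a p : α}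
    (h : Minimal (· ∈ s ∩ Iic a) p) : Minimal (· ∈ s) p :=
  ⟨h.prop.1, fun _ hq hqp ↦ h.2 ⟨hq, hqp.trans h.prop.2⟩ hqp⟩

/-- Every point of a closed subset of the nonnegative orthant is dominated by a
Pareto-minimal point of the set. -/
theorem exists_pareto_le (n : ℕ) (S : Set (Fin n → ℝ))
    (hc : IsClosed S) (hn : S ⊆ {x : Fin n → ℝ | 0 ≤ x}) :
    ∀ x ∈ S, ∃ p ∈ S, p ≤ x ∧ p ∈ paretoFrontier S := by
  intro x hx
  have hK : IsCompact (S ∩ Iic x) :=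
    isCompact_Icc.of_isClosed_subset (hc.inter isClosed_Iic) fun y hy ↦ ⟨hn hy.1, hy.2⟩
  obtain ⟨p, hp⟩ := hK.exists_minimal_of_strictMonoOn ⟨x, hx, mem_Iic.2 le_rfl⟩
    (Fintype.sum_strictMono.strictMonoOn _) (by fun_prop)
  exact ⟨p, hp.prop.1, hp.prop.2, mem_paretoFrontier_iff.2 hp.of_mem_inter_Iic⟩
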